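/- arXiv:1908.05660 — 2 statements merged into one kernel-verified Lean document; each statement's English description precedes it below -/
import Mathlib

section
/- Let φ₁(z) = tanh'(z/√2)·e^{-z²/2} as a function of a complex variable z. For every β with 0 ≤ β ≤ √2·π/4, for all z = x + iy with |y| ≤ β < √2·π/4, one has |φ₁(z)| ≤ 40·e^{β²}·sec²(β)·e^{-√(β²-y²)·|x|}. -/
/-!
Put `w = z / √2 = u + iv`. Since `|y| ≤ β ≤ √2·π/4`, we have `|v| ≤ π/4`, so
`|cosh w|² = cos²v cosh²u + sin²v sinh²u ≥ cos²v ≥ 1/2` and `|tanh'(w)| ≤ 2`. The Gaussian factor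
has modulus `e^{(y²-x²)/2}`, and completing the square with `s = √(β²-y²)` gives
`(y²-x²)/2 = β² - s|x| - ((|x|-s)² + s² + y²)/2 ≤ β² - s|x|`. The constants `40` and
`sec²β ≥ 1` leave room to spare.
-/

open Complex

theorem norm_cosh_add_mul_I_sq (u v : ℝ) :
    ‖cosh (u + v * I)‖ ^ 2 = (Real.cosh u * Real.cos v) ^ 2 + (Real.sinh u * Real.sin v) ^ 2 := by
  have hcosh : cosh (u + v * I) =
      ((Real.cosh u * Real.cos v : ℝ) : ℂ) + ((Real.sinh u * Real.sin v : ℝ) : ℂ) * I := by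
    rw [cosh_add, cosh_mul_I, sinh_mul_I]
    push_cast
    ring
  rw [hcosh, Complex.sq_norm, normSq_add_mul_I]

theorem cos_sq_le_norm_cosh_add_mul_I_sq (u v : ℝ) :
    Real.cos v ^ 2 ≤ ‖cosh (u + v * I)‖ ^ 2 := by
  rw [norm_cosh_add_mul_I_sq]
  have hu : 1 ≤ Real.cosh u ^ 2 := one_le_pow₀ (Real.one_le_cosh u)
  nlinarith [sq_nonneg (Real.cos v), sq_nonneg (Real.sinh u * Real.sin v)]

theorem half_le_cos_sq_of_abs_le_pi_div_four {v : ℝ} (hv : |v| ≤ Real.pi / 4) :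
    1 / 2 ≤ Real.cos v ^ 2 := by
  have hcos : Real.cos (Real.pi / 4) ≤ Real.cos |v| :=
    Real.cos_le_cos_of_nonneg_of_le_pi (abs_nonneg v) (by linarith [Real.pi_pos]) hv
  rw [Real.cos_abs, Real.cos_pi_div_four] at hcos
  have hsqrt : 0 ≤ √2 / 2 := by positivity
  calc 1 / 2 = (√2 / 2) ^ 2 := by rw [div_pow, Real.sq_sqrt zero_le_two]; norm_num
    _ ≤ Real.cos v ^ 2 := pow_le_pow_left₀ hsqrt hcos 2

theorem norm_exp_neg_sq_div_two (x y : ℝ) :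
    ‖exp (-(x + y * I) ^ 2 / 2)‖ = Real.exp ((y ^ 2 - x ^ 2) / 2) := by
  rw [norm_exp]
  congr 1
  have : -((x : ℂ) + y * I) ^ 2 / 2 = ((y ^ 2 - x ^ 2) / 2 : ℝ) + (-(x * y) : ℝ) * I := by
    push_cast
    ring_nf
    rw [I_sq]
    ring
  rw [this, add_re, ofReal_re, re_ofReal_mul, I_re, mul_zero, add_zero]

theorem sq_sub_sq_div_two_le {x y β : ℝ} (hy : y ^ 2 ≤ β ^ 2) :
    (y ^ 2 - x ^ 2) / 2 ≤ β ^ 2 - √(β ^ 2 - y ^ 2) * |x| := by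
  have hs : √(β ^ 2 - y ^ 2) ^ 2 = β ^ 2 - y ^ 2 := Real.sq_sqrt (by linarith)
  nlinarith [sq_nonneg (|x| - √(β ^ 2 - y ^ 2)), sq_abs x, sq_nonneg y]

theorem one_le_one_div_cos_sq {β : ℝ} (h : Real.cos β ≠ 0) : 1 ≤ (1 / Real.cos β) ^ 2 := by
  rw [div_pow, one_pow, one_le_div (by positivity)]
  exact Real.cos_sq_le_one β

theorem phi1_strip_bound_general (β x y : ℝ)
    (hβ : β ≤ Real.sqrt 2 * Real.pi / 4) (hy : |y| ≤ β) :
    ‖(1 / (Complex.cosh ((x + y * Complex.I) / Real.sqrt 2)) ^ 2) *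
        Complex.exp (-(x + y * Complex.I) ^ 2 / 2)‖ ≤
      40 * Real.exp (β ^ 2) * (1 / Real.cos β) ^ 2 *
        Real.exp (-Real.sqrt (β ^ 2 - y ^ 2) * |x|) := by
  have hsqrt2 : 0 < √2 := by positivity
  have hv : |y / √2| ≤ Real.pi / 4 := by
    rw [abs_div, abs_of_pos hsqrt2, div_le_iff₀ hsqrt2]
    linarith
  have hz : ((x : ℂ) + y * I) / (√2 : ℝ) = ((x / √2 : ℝ) : ℂ) + (y / √2 : ℝ) * I := by
    push_cast
    ring
  have hcosh : 1 / 2 ≤ ‖cosh (((x + y * I) : ℂ) / (√2 : ℝ))‖ ^ 2 := by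
    rw [hz]
    exact (half_le_cos_sq_of_abs_le_pi_div_four hv).trans (cos_sq_le_norm_cosh_add_mul_I_sq _ _)
  have hgauss : Real.exp ((y ^ 2 - x ^ 2) / 2) ≤
      Real.exp (β ^ 2) * Real.exp (-√(β ^ 2 - y ^ 2) * |x|) := by
    rw [← Real.exp_add, Real.exp_le_exp, neg_mul, ← sub_eq_add_neg]
    exact sq_sub_sq_div_two_le (sq_le_sq' (abs_le.1 hy).1 (abs_le.1 hy).2)
  have hcosβ : Real.cos β ≠ 0 := by
    have : √2 < 2 := by nlinarith [Real.sq_sqrt zero_le_two]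
    refine (Real.cos_pos_of_mem_Ioo ⟨?_, ?_⟩).ne' <;> nlinarith [abs_nonneg y, Real.pi_pos]
  rw [norm_mul, norm_div, norm_one, norm_pow, norm_exp_neg_sq_div_two]
  calc 1 / ‖cosh ((x + y * I) / (√2 : ℝ))‖ ^ 2 * Real.exp ((y ^ 2 - x ^ 2) / 2)
      ≤ 2 * (Real.exp (β ^ 2) * Real.exp (-√(β ^ 2 - y ^ 2) * |x|)) := by
        gcongr
        rw [div_le_iff₀ (by linarith)]
        linarith
    _ ≤ (40 * (1 / Real.cos β) ^ 2) * (Real.exp (β ^ 2) * Real.exp (-√(β ^ 2 - y ^ 2) * |x|)) := by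
        gcongr
        linarith [one_le_one_div_cos_sq hcosβ]
    _ = _ := by ring

theorem phi1_strip_bound (β x y : ℝ)
    (hβ0 : 0 ≤ β) (hβ : β ≤ Real.sqrt 2 * Real.pi / 4) (hy : |y| ≤ β) :
    ‖(1 / (Complex.cosh ((x + y * Complex.I) / Real.sqrt 2)) ^ 2) *
        Complex.exp (-(x + y * Complex.I) ^ 2 / 2)‖ ≤
      40 * Real.exp (β ^ 2) * (1 / Real.cos β) ^ 2 *
        Real.exp (-Real.sqrt (β ^ 2 - y ^ 2) * |x|) :=
  phi1_strip_bound_general β x y hβ hy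
end

section
/- If the Hermite coefficients of a function f ∈ L²(ℝ, μ) satisfy |f_k| ≤ C·e^{-(π/(4√2))·√(2k+1)} for all k, then the tail sum ∑_{k=p+1}^{∞} |f_k|² ≤ C²·(32/π²)·((π/(4√2))·√(2p+1) + 1)·e^{-(π/(4√2))·√(2p+1)}; in particular the truncation error in L²(μ) is O(√p · e^{-(π/(4√2))√p}). -/
/-!
With `a = π / (4√2)` the hypothesis gives `f k ^ 2 ≤ C² e^{-2a√(2k+1)}`. Since the right-hand side
is decreasing in `k`, the tail sum is at most `C² ∫_p^∞ e^{-2a√(2x+1)} dx`, and the substitution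
`s = √(2x+1)` evaluates this integral as `C² (2as + 1) e^{-2as} / (2a)²` with `s = √(2p+1)`.
Since `4a² = π² / 8`, this is at most `C² (16/π²) (as + 1) e^{-as}`.
-/

open Real Finset

theorem sum_range_le_sub_of_hasDerivAt_neg {φ G : ℝ → ℝ} {x₀ : ℝ}
    (hφ : AntitoneOn φ (Set.Ici x₀)) (hG : ∀ x ∈ Set.Ici x₀, HasDerivAt G (-φ x) x) (n : ℕ) :
    ∑ i ∈ range n, φ (x₀ + ↑(i + 1)) ≤ G x₀ - G (x₀ + n) := by
  have hle : x₀ ≤ x₀ + n := le_add_of_nonneg_right n.cast_nonneg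
  have hint : IntervalIntegrable φ MeasureTheory.volume x₀ (x₀ + n) :=
    (hφ.mono (by rw [Set.uIcc_of_le hle]; exact Set.Icc_subset_Ici_self)).intervalIntegrable
  have hFTC : ∫ x in x₀..x₀ + n, -φ x = G (x₀ + n) - G x₀ :=
    intervalIntegral.integral_eq_sub_of_hasDerivAt
      (fun x hx => hG x (by rw [Set.uIcc_of_le hle] at hx; exact hx.1)) hint.neg
  rw [intervalIntegral.integral_neg] at hFTC
  calc ∑ i ∈ range n, φ (x₀ + ↑(i + 1)) ≤ ∫ x in x₀..x₀ + n, φ x :=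
        (hφ.mono Set.Icc_subset_Ici_self).sum_le_integral
    _ = G x₀ - G (x₀ + n) := by linarith

theorem tsum_tail_le_of_hasDerivAt_neg {u : ℕ → ℝ} {φ G : ℝ → ℝ} {p : ℕ} (hu : ∀ k, 0 ≤ u k)
    (huφ : ∀ k, p < k → u k ≤ φ k) (hφ : AntitoneOn φ (Set.Ici p))
    (hG : ∀ x ∈ Set.Ici (p : ℝ), HasDerivAt G (-φ x) x) (hG0 : ∀ x ∈ Set.Ici (p : ℝ), 0 ≤ G x) :
    ∑' k, (if p + 1 ≤ k then u k else 0) ≤ G p := by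
  have htail_nonneg : ∀ k, 0 ≤ if p + 1 ≤ k then u k else 0 := fun k => by
    split_ifs
    exacts [hu k, le_rfl]
  refine Real.tsum_le_of_sum_range_le htail_nonneg fun n => ?_
  calc ∑ k ∈ range n, (if p + 1 ≤ k then u k else 0)
      ≤ ∑ k ∈ range (p + 1 + n), (if p + 1 ≤ k then u k else 0) :=
        sum_le_sum_of_subset_of_nonneg (range_subset_range.2 (by omega))
          fun k _ _ => htail_nonneg k
    _ = ∑ i ∈ range n, u (p + (i + 1)) := by
        rw [sum_range_add,
          sum_eq_zero fun k hk => if_neg (by have := mem_range.1 hk; omega), zero_add]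
        refine sum_congr rfl fun i _ => ?_
        rw [if_pos (by omega)]
        ring_nf
    _ ≤ ∑ i ∈ range n, φ (p + ↑(i + 1)) :=
        sum_le_sum fun i _ => by exact_mod_cast huφ _ (by omega)
    _ ≤ G p - G (p + n) := sum_range_le_sub_of_hasDerivAt_neg hφ hG n
    _ ≤ G p := sub_le_self _ (hG0 _ (by simp))

/-- `∫_x^∞ exp (-b √(2t+1)) dt` for `b > 0`: substitute `s = √(2t+1)`, so `dt = s ds`. -/
noncomputable def expNegSqrtTail (b x : ℝ) : ℝ :=
  (b * √(2 * x + 1) + 1) / b ^ 2 * exp (-b * √(2 * x + 1))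

theorem expNegSqrtTail_nonneg {b : ℝ} (hb : 0 ≤ b) (x : ℝ) : 0 ≤ expNegSqrtTail b x := by
  unfold expNegSqrtTail
  positivity

theorem hasDerivAt_sqrt_two_mul_add_one {x : ℝ} (hx : 0 < 2 * x + 1) :
    HasDerivAt (fun y => √(2 * y + 1)) (1 / √(2 * x + 1)) x := by
  have hlin : HasDerivAt (fun y : ℝ => 2 * y + 1) 2 x := by
    simpa using ((hasDerivAt_id x).const_mul (2 : ℝ)).add_const 1
  refine ((hasDerivAt_sqrt hx.ne').comp x hlin).congr_deriv ?_
  field_simp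

theorem hasDerivAt_expNegSqrtTail {b x : ℝ} (hb : b ≠ 0) (hx : 0 < 2 * x + 1) :
    HasDerivAt (expNegSqrtTail b) (-exp (-b * √(2 * x + 1))) x := by
  have hs := hasDerivAt_sqrt_two_mul_add_one hx
  have hs0 : √(2 * x + 1) ≠ 0 := (sqrt_pos.2 hx).ne'
  refine ((((hs.const_mul b).add_const 1).div_const (b ^ 2)).mul
    (hs.const_mul (-b)).exp).congr_deriv ?_
  field_simp
  ring

theorem antitone_exp_neg_mul_sqrt {b : ℝ} (hb : 0 ≤ b) :
    Antitone fun x : ℝ => exp (-b * √(2 * x + 1)) := fun x y hxy => by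
  have : √(2 * x + 1) ≤ √(2 * y + 1) := sqrt_le_sqrt (by linarith)
  exact exp_le_exp.2 (by nlinarith)

theorem tsum_tail_le_mul_expNegSqrtTail {u : ℕ → ℝ} {b c : ℝ} (hb : 0 < b) (hu : ∀ k, 0 ≤ u k)
    (h : ∀ k : ℕ, u k ≤ c * exp (-b * √(2 * k + 1))) (p : ℕ) :
    ∑' k, (if p + 1 ≤ k then u k else 0) ≤ c * expNegSqrtTail b p := by
  have hc : 0 ≤ c := nonneg_of_mul_nonneg_left ((hu 0).trans (h 0)) (exp_pos _)
  refine tsum_tail_le_of_hasDerivAt_neg hu (fun k _ => h k)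
    (((antitone_exp_neg_mul_sqrt hb.le).const_mul hc).antitoneOn _) (fun x hx => ?_)
    (fun x _ => mul_nonneg hc (expNegSqrtTail_nonneg hb.le x))
  have hx' : 0 < 2 * x + 1 := by linarith [Set.mem_Ici.1 hx, p.cast_nonneg (α := ℝ)]
  simpa using (hasDerivAt_expNegSqrtTail hb.ne' hx').const_mul c

theorem expNegSqrtTail_two_mul_le {a : ℝ} (ha : 0 < a) (x : ℝ) :
    expNegSqrtTail (2 * a) x ≤ (a * √(2 * x + 1) + 1) / (2 * a ^ 2) * exp (-a * √(2 * x + 1)) := by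
  unfold expNegSqrtTail
  have hs : 0 ≤ √(2 * x + 1) := sqrt_nonneg _
  have hcoef :
      (2 * a * √(2 * x + 1) + 1) / (2 * a) ^ 2 ≤ (a * √(2 * x + 1) + 1) / (2 * a ^ 2) := by
    rw [div_le_div_iff₀ (by positivity) (by positivity)]
    nlinarith [mul_nonneg ha.le hs, sq_nonneg a]
  have hexp : exp (-(2 * a) * √(2 * x + 1)) ≤ exp (-a * √(2 * x + 1)) := by
    gcongr
    nlinarith
  exact mul_le_mul hcoef hexp (exp_nonneg _) (by positivity)

theorem hermite_tail_bound_general (f : ℕ → ℝ) (C : ℝ) (p : ℕ)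
    (h : ∀ k, |f k| ≤ C * Real.exp (-(Real.pi / (4 * Real.sqrt 2)) * Real.sqrt (2 * k + 1))) :
    (∑' k : ℕ, if p + 1 ≤ k then (f k) ^ 2 else 0) ≤
      C ^ 2 * (32 / Real.pi ^ 2) *
        ((Real.pi / (4 * Real.sqrt 2)) * Real.sqrt (2 * p + 1) + 1) *
        Real.exp (-(Real.pi / (4 * Real.sqrt 2)) * Real.sqrt (2 * p + 1)) := by
  set a := π / (4 * √2) with ha_def
  have ha : 0 < a := by positivity
  have ha_sq : 2 * a ^ 2 = π ^ 2 / 16 := by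
    rw [ha_def, div_pow, mul_pow, sq_sqrt zero_le_two]
    ring
  have hsq : ∀ k : ℕ, f k ^ 2 ≤ C ^ 2 * exp (-(2 * a) * √(2 * k + 1)) := fun k => calc
    f k ^ 2 = |f k| ^ 2 := (sq_abs _).symm
    _ ≤ (C * exp (-a * √(2 * k + 1))) ^ 2 := pow_le_pow_left₀ (abs_nonneg _) (h k) 2
    _ = C ^ 2 * exp (-(2 * a) * √(2 * k + 1)) := by rw [mul_pow, ← exp_nat_mul]; ring_nf
  calc _ ≤ C ^ 2 * expNegSqrtTail (2 * a) p :=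
        tsum_tail_le_mul_expNegSqrtTail (by positivity) (fun k => sq_nonneg _) hsq p
    _ ≤ C ^ 2 * ((a * √(2 * p + 1) + 1) / (2 * a ^ 2) * exp (-a * √(2 * p + 1))) := by
        gcongr
        exact expNegSqrtTail_two_mul_le ha p
    _ = C ^ 2 * (16 / π ^ 2) * (a * √(2 * p + 1) + 1) * exp (-a * √(2 * p + 1)) := by
        rw [ha_sq]
        field_simp
    _ ≤ _ := by gcongr; norm_num

theorem hermite_tail_bound (f : ℕ → ℝ) (C : ℝ) (hC : 0 < C) (p : ℕ)
    (h : ∀ k, |f k| ≤ C * Real.exp (-(Real.pi / (4 * Real.sqrt 2)) * Real.sqrt (2 * k + 1))) :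
    (∑' k : ℕ, if p + 1 ≤ k then (f k) ^ 2 else 0) ≤
      C ^ 2 * (32 / Real.pi ^ 2) *
        ((Real.pi / (4 * Real.sqrt 2)) * Real.sqrt (2 * p + 1) + 1) *
        Real.exp (-(Real.pi / (4 * Real.sqrt 2)) * Real.sqrt (2 * p + 1)) :=
  hermite_tail_bound_general f C p h
end
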